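/- Let 0 < q < 1, let t > 0 be a real number, and let k, r, ν be natural numbers with 1 ≤ k < r ≤ ν. Define F(y, z) = Σ_{j=r}^{ν} Σ_{s=k}^{j} q^{-s(ν-s) - (j-s)(ν-j)} · ([ν]_q!/([s]_q![j−s]_q![ν−j]_q!)) · (y/t)^s (z/t)^{j-s} · ∏_{i=1}^{j-s} (1 − y/(q^{i-1} z)) · ∏_{m=1}^{ν-j} (1 − z/(q^{m-1} t)). Then for all real y ≠ 0 and z ≠ 0, applying the q-derivative first in y and then in z to F yields q^{-r(ν-r) - k(r-k)} · ([ν]_q!/([k−1]_q![r−k−1]_q![ν−r]_q!)) · (y^{k-1}/t^r) · z^{r-k-1} · ∏_{i=1}^{r-k-1} (1 − y/(q^{i} z)) · ∏_{m=1}^{ν-r} (1 − z/(q^{m-1} t)). -/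

import Mathlib

/-- The `q`-number `[m]_q = (1 - q^m)/(1 - q)`. -/
noncomputable def qnum (q : ℝ) (m : ℕ) : ℝ := (1 - q ^ m) / (1 - q)

/-- The `q`-factorial `[n]_q! = [1]_q [2]_q ⋯ [n]_q`. -/
noncomputable def qfact (q : ℝ) (n : ℕ) : ℝ := ∏ i ∈ Finset.range n, qnum q (i + 1)

/-!
Write `(x ⊖ a)ⁿ = (x - a)(x - a/q)⋯(x - a/qⁿ⁻¹)`. Up to a power of `t`, the summand of `F`
indexed by `(j, s)` is the `q⁻¹`-multinomial coefficient `[ν; s, j-s, ν-j]` times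
`(y ⊖ 0)ˢ (z ⊖ y)ʲ⁻ˢ (t ⊖ z)ᵛ⁻ʲ`, and the `q`-derivative of `(x ⊖ a)ⁿ` in either argument is
again such a product of degree `n - 1`. By the `q`-Leibniz rule, the `q`-derivative in `x` of
`∑ₙ cₙ (x ⊖ a)ⁿ (b ⊖ x)ᴺ⁻ⁿ` therefore telescopes as soon as the coefficients satisfy
`cₙ₊₁ [n+1] q^(N-n-1) = cₙ [N-n] qⁿ`, and the multinomial coefficients do, since moving one unit
between two of their parts changes them by exactly this factor. Telescoping once in `y`
(`a = 0`, `b = z`, over `s`) and once in `z` (`a = y`, `b = t`, over `j`) leaves only the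
boundary term `s = k`, `j = r`, which is the density.
-/

open Finset

section QCalculus

variable {q : ℝ}

lemma qnum_zero (q : ℝ) : qnum q 0 = 0 := by simp [qnum]

lemma qnum_ne_zero (hq : |q| ≠ 1) {m : ℕ} (hm : m ≠ 0) : qnum q m ≠ 0 := by
  have hqm : q ^ m ≠ 1 := fun h => hq <| (pow_eq_one_iff_of_nonneg (abs_nonneg q) hm).mp
    (by rw [pow_abs, h, abs_one])
  have hq1 : q ≠ 1 := fun h => hq (by rw [h, abs_one])
  exact div_ne_zero (sub_ne_zero.mpr hqm.symm) (sub_ne_zero.mpr hq1.symm)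

lemma qfact_succ (q : ℝ) (n : ℕ) : qfact q (n + 1) = qfact q n * qnum q (n + 1) :=
  prod_range_succ _ _

lemma qfact_ne_zero (hq : |q| ≠ 1) (n : ℕ) : qfact q n ≠ 0 :=
  prod_ne_zero_iff.mpr fun i _ => qnum_ne_zero hq i.succ_ne_zero

noncomputable def qDeriv (q : ℝ) (f : ℝ → ℝ) (x : ℝ) : ℝ := (f x - f (q * x)) / ((1 - q) * x)

lemma qDeriv_congr {f g : ℝ → ℝ} {x : ℝ} (hx : f x = g x) (hqx : f (q * x) = g (q * x)) :
    qDeriv q f x = qDeriv q g x := by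
  rw [qDeriv, qDeriv, hx, hqx]

lemma qDeriv_sum {ι : Type*} (s : Finset ι) (f : ι → ℝ → ℝ) (x : ℝ) :
    qDeriv q (fun x => ∑ i ∈ s, f i x) x = ∑ i ∈ s, qDeriv q (f i) x := by
  simp only [qDeriv, ← sum_sub_distrib, sum_div]

lemma qDeriv_const_mul (c : ℝ) (f : ℝ → ℝ) (x : ℝ) :
    qDeriv q (fun x => c * f x) x = c * qDeriv q f x := by
  simp only [qDeriv, ← mul_sub, mul_div_assoc]

lemma qDeriv_mul (f g : ℝ → ℝ) (x : ℝ) :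
    qDeriv q (fun x => f x * g x) x = qDeriv q f x * g x + f (q * x) * qDeriv q g x := by
  simp only [qDeriv]
  ring

/-- The `q⁻¹`-analogue `(x ⊖ a)ⁿ` of `(x - a)ⁿ`. -/
noncomputable def qSubPow (q x a : ℝ) (n : ℕ) : ℝ := ∏ i ∈ range n, (x - a / q ^ i)

lemma qSubPow_succ (x a : ℝ) (n : ℕ) :
    qSubPow q x a (n + 1) = qSubPow q x a n * (x - a / q ^ n) :=
  prod_range_succ _ _

lemma qSubPow_succ' (x a : ℝ) (n : ℕ) :
    qSubPow q x a (n + 1) = (x - a) * qSubPow q x (a / q) n := by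
  rw [qSubPow, prod_range_succ', mul_comm, pow_zero, div_one]
  congr 1
  exact prod_congr rfl fun i _ => by rw [pow_succ', div_div]

lemma qSubPow_mul_left (hq : q ≠ 0) (x a : ℝ) (n : ℕ) :
    qSubPow q (q * x) a n = q ^ n * qSubPow q x (a / q) n := by
  rw [qSubPow, qSubPow, pow_eq_prod_const, ← prod_mul_distrib]
  exact prod_congr rfl fun i _ => by field_simp

lemma qSubPow_zero_right (x : ℝ) (n : ℕ) : qSubPow q x 0 n = x ^ n := by
  simp [qSubPow]

lemma qSubPow_eq_pow_mul_prod {b : ℝ} (hb : b ≠ 0) (a : ℝ) (n : ℕ) :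
    qSubPow q b a n = b ^ n * ∏ i ∈ range n, (1 - a / (q ^ i * b)) := by
  rw [qSubPow, pow_eq_prod_const, ← prod_mul_distrib]
  exact prod_congr rfl fun i _ => by field_simp

lemma qDeriv_qSubPow (hq : q ≠ 0) {x : ℝ} (hx : x ≠ 0) (a : ℝ) (n : ℕ) :
    qDeriv q (fun x => qSubPow q x a n) x = qnum q n * qSubPow q x (a / q) (n - 1) := by
  cases n with
  | zero => simp [qDeriv, qSubPow, qnum_zero]
  | succ n =>
    rw [qDeriv, qSubPow_mul_left hq, qSubPow_succ', qSubPow_succ, Nat.add_sub_cancel, qnum]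
    have hshift : q ^ (n + 1) * (a / q / q ^ n) = a := by field_simp; ring
    calc _ = (1 - q ^ (n + 1)) * qSubPow q x (a / q) n * x / ((1 - q) * x) := by
          congr 1; linear_combination qSubPow q x (a / q) n * hshift
      _ = _ := by rw [mul_div_mul_right _ _ hx]; ring

lemma qDeriv_qSubPow_right (hq : q ≠ 0) {x : ℝ} (hx : x ≠ 0) (b : ℝ) (m : ℕ) :
    qDeriv q (fun x => qSubPow q b x m) x
      = -(qnum q m / q ^ (m - 1)) * qSubPow q b x (m - 1) := by
  cases m with
  | zero => simp [qDeriv, qSubPow, qnum_zero]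
  | succ m =>
    rw [qDeriv, qSubPow_succ, qSubPow_succ' b (q * x), mul_div_cancel_left₀ _ hq,
      Nat.add_sub_cancel, qnum]
    calc _ = -((1 - q ^ (m + 1)) * qSubPow q b x m * x / q ^ m) / ((1 - q) * x) := by
          congr 1; field_simp; ring
      _ = _ := by rw [mul_comm (1 - q) x]; field_simp

lemma qDeriv_qSubPow_mul_qSubPow (hq : q ≠ 0) {x : ℝ} (hx : x ≠ 0) (a b : ℝ) (n m : ℕ) :
    qDeriv q (fun x => qSubPow q x a n * qSubPow q b x m) x
      = qnum q n * qSubPow q x (a / q) (n - 1) * qSubPow q b x m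
        - q ^ n * (qnum q m / q ^ (m - 1)) * qSubPow q x (a / q) n * qSubPow q b x (m - 1) := by
  rw [qDeriv_mul, qDeriv_qSubPow hq hx, qDeriv_qSubPow_right hq hx, qSubPow_mul_left hq]
  ring

lemma sum_Icc_sub_eq_sub_of_telescope {M : Type*} [AddCommGroup M] (U V : ℕ → M) {p N : ℕ}
    (hpN : p ≤ N) (hUV : ∀ n < N, V n = U (n + 1)) :
    ∑ n ∈ Icc p N, (U n - V n) = U p - V N := by
  induction N, hpN using Nat.le_induction with
  | base => simp
  | succ N hpN ih =>
    rw [sum_Icc_succ_top (by omega), ih fun n hn => hUV n (by omega), hUV N (by omega)]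
    abel

lemma qDeriv_sum_qSubPow_mul_qSubPow (hq : q ≠ 0) {x : ℝ} (hx : x ≠ 0) (a b : ℝ)
    (c : ℕ → ℝ) {p N : ℕ} (hpN : p ≤ N)
    (hc : ∀ n < N, c (n + 1) * qnum q (n + 1) * q ^ (N - n - 1) = c n * qnum q (N - n) * q ^ n) :
    qDeriv q (fun x => ∑ n ∈ Icc p N, c n * (qSubPow q x a n * qSubPow q b x (N - n))) x
      = c p * qnum q p * qSubPow q x (a / q) (p - 1) * qSubPow q b x (N - p) := by
  set U : ℕ → ℝ := fun n => c n * qnum q n * qSubPow q x (a / q) (n - 1) * qSubPow q b x (N - n)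
  set V : ℕ → ℝ := fun n => c n * q ^ n * (qnum q (N - n) / q ^ (N - n - 1))
    * qSubPow q x (a / q) n * qSubPow q b x (N - n - 1)
  have hUV : ∀ n < N, V n = U (n + 1) := by
    intro n hn
    simp only [U, V, Nat.add_sub_cancel, Nat.sub_sub]
    rw [← Nat.sub_sub]
    field_simp
    linear_combination (-(qSubPow q x (a / q) n * qSubPow q b x (N - n - 1))) * hc n hn
  calc _ = ∑ n ∈ Icc p N, (U n - V n) := by
        rw [qDeriv_sum]
        refine sum_congr rfl fun n _ => ?_
        rw [qDeriv_const_mul, qDeriv_qSubPow_mul_qSubPow hq hx]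
        ring
    _ = U p := by
        rw [sum_Icc_sub_eq_sub_of_telescope U V hpN hUV]
        simp [V, qnum_zero]

/-- Equals the `q⁻¹`-multinomial coefficient `[a+b+c; a, b, c]_{q⁻¹}`. -/
noncomputable def qInvMultinomial (q : ℝ) (a b c : ℕ) : ℝ :=
  q⁻¹ ^ (a * b + a * c + b * c) * (qfact q (a + b + c) / (qfact q a * qfact q b * qfact q c))

lemma qInvMultinomial_rotate (q : ℝ) (a b c : ℕ) :
    qInvMultinomial q a b c = qInvMultinomial q b c a := by
  rw [qInvMultinomial, qInvMultinomial, show b * c + b * a + c * a = a * b + a * c + b * c by ring,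
    show b + c + a = a + b + c by ring]
  ring

lemma qInvMultinomial_succ_mul (hq0 : q ≠ 0) (hq : |q| ≠ 1) (a b c : ℕ) :
    qInvMultinomial q (a + 1) b c * qnum q (a + 1) * q ^ b
      = qInvMultinomial q a (b + 1) c * qnum q (b + 1) * q ^ a := by
  rw [qInvMultinomial, qInvMultinomial,
    show (a + 1) * b + (a + 1) * c + b * c = (a * b + a * c + b * c + c) + b by ring,
    show a * (b + 1) + a * c + (b + 1) * c = (a * b + a * c + b * c + c) + a by ring,
    show a + (b + 1) + c = a + 1 + b + c by ring, qfact_succ, qfact_succ]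
  simp only [inv_pow, pow_add]
  have := qfact_ne_zero hq a
  have := qfact_ne_zero hq b
  have := qfact_ne_zero hq c
  have := qnum_ne_zero hq a.succ_ne_zero
  have := qnum_ne_zero hq b.succ_ne_zero
  field_simp

end QCalculus

noncomputable def jointCdfTerm (q t : ℝ) (ν j s : ℕ) (y z : ℝ) : ℝ :=
  q ^ (-((s : ℤ) * ((ν : ℤ) - (s : ℤ))) - ((j : ℤ) - (s : ℤ)) * ((ν : ℤ) - (j : ℤ)))
    * (qfact q ν / (qfact q s * qfact q (j - s) * qfact q (ν - j)))
    * (y / t) ^ s * (z / t) ^ (j - s)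
    * (∏ i ∈ range (j - s), (1 - y / (q ^ i * z)))
    * (∏ m ∈ range (ν - j), (1 - z / (q ^ m * t)))

noncomputable def partialDensityTerm (q t : ℝ) (k ν j : ℕ) (y z : ℝ) : ℝ :=
  qInvMultinomial q k (j - k) (ν - j) * qnum q k * y ^ (k - 1) / t ^ ν
    * (qSubPow q z y (j - k) * qSubPow q t z (ν - j))

noncomputable def jointDensity (q t : ℝ) (k r ν : ℕ) (y z : ℝ) : ℝ :=
  q ^ (-((r : ℤ) * ((ν : ℤ) - (r : ℤ))) - (k : ℤ) * ((r : ℤ) - (k : ℤ)))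
    * (qfact q ν / (qfact q (k - 1) * qfact q (r - k - 1) * qfact q (ν - r)))
    * (y ^ (k - 1) / t ^ r) * z ^ (r - k - 1)
    * (∏ i ∈ range (r - k - 1), (1 - y / (q ^ (i + 1) * z)))
    * (∏ m ∈ range (ν - r), (1 - z / (q ^ m * t)))

section JointDistribution

variable {q t : ℝ}

lemma jointCdfTerm_eq (ht : t ≠ 0) {ν j s : ℕ} (hsj : s ≤ j) (hjν : j ≤ ν) (y : ℝ)
    {z : ℝ} (hz : z ≠ 0) :
    jointCdfTerm q t ν j s y z
      = qInvMultinomial q s (j - s) (ν - j) * (qSubPow q t z (ν - j) / t ^ ν)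
        * (qSubPow q y 0 s * qSubPow q z y (j - s)) := by
  obtain ⟨n, rfl⟩ := Nat.exists_eq_add_of_le hsj
  obtain ⟨m, rfl⟩ := Nat.exists_eq_add_of_le hjν
  have hexp : -((s : ℤ) * (((s + n + m : ℕ) : ℤ) - s)) - (((s + n : ℕ) : ℤ) - s)
      * (((s + n + m : ℕ) : ℤ) - ((s + n : ℕ) : ℤ)) = -((s * n + s * m + n * m : ℕ) : ℤ) := by
    push_cast; ring
  rw [jointCdfTerm, hexp, zpow_neg, zpow_natCast, ← inv_pow]
  simp only [qInvMultinomial, Nat.add_sub_cancel_left, qSubPow_zero_right,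
    qSubPow_eq_pow_mul_prod hz, qSubPow_eq_pow_mul_prod ht]
  generalize q⁻¹ ^ (s * n + s * m + n * m) * _ = K
  rw [div_pow, div_pow, pow_add, pow_add]
  field_simp

lemma qDeriv_sum_jointCdfTerm (hq0 : q ≠ 0) (hq : |q| ≠ 1) (ht : t ≠ 0) {k j ν : ℕ}
    (hkj : k ≤ j) (hjν : j ≤ ν) {y z : ℝ} (hy : y ≠ 0) (hz : z ≠ 0) :
    qDeriv q (fun y => ∑ s ∈ Icc k j, jointCdfTerm q t ν j s y z) y
      = partialDensityTerm q t k ν j y z := by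
  set C : ℝ := qSubPow q t z (ν - j) / t ^ ν
  have hsum : ∀ y, ∑ s ∈ Icc k j, jointCdfTerm q t ν j s y z
      = ∑ s ∈ Icc k j, qInvMultinomial q s (j - s) (ν - j) * C
          * (qSubPow q y 0 s * qSubPow q z y (j - s)) :=
    fun y => sum_congr rfl fun s hs => jointCdfTerm_eq ht (mem_Icc.1 hs).2 hjν y hz
  simp_rw [hsum]
  refine (qDeriv_sum_qSubPow_mul_qSubPow hq0 hy 0 z
    (fun s => qInvMultinomial q s (j - s) (ν - j) * C) hkj fun n hn => ?_).trans ?_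
  · obtain ⟨d, rfl⟩ : ∃ d, j = n + 1 + d := ⟨j - n - 1, by omega⟩
    simp only [show n + 1 + d - (n + 1) = d by omega, show n + 1 + d - n = d + 1 by omega,
      Nat.add_sub_cancel]
    linear_combination C * qInvMultinomial_succ_mul hq0 hq n d (ν - (n + 1 + d))
  · simp only [zero_div, qSubPow_zero_right, partialDensityTerm, C]
    ring

lemma qDeriv_sum_partialDensityTerm (hq0 : q ≠ 0) (hq : |q| ≠ 1) (y : ℝ) {k r ν : ℕ}
    (hkr : k ≤ r) (hrν : r ≤ ν) {z : ℝ} (hz : z ≠ 0) :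
    qDeriv q (fun z => ∑ j ∈ Icc r ν, partialDensityTerm q t k ν j y z) z
      = qInvMultinomial q k (r - k) (ν - r) * qnum q k * qnum q (r - k) * y ^ (k - 1) / t ^ ν
        * (qSubPow q z (y / q) (r - k - 1) * qSubPow q t z (ν - r)) := by
  set C : ℝ := qnum q k * y ^ (k - 1) / t ^ ν
  have hreindex : ∀ z, ∑ j ∈ Icc r ν, partialDensityTerm q t k ν j y z
      = ∑ n ∈ Icc (r - k) (ν - k), qInvMultinomial q k n (ν - k - n) * C
          * (qSubPow q z y n * qSubPow q t z (ν - k - n)) := by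
    intro z
    rw [← Nat.sub_add_cancel hkr, ← Nat.sub_add_cancel (hkr.trans hrν), ← map_add_right_Icc,
      sum_map, Nat.sub_add_cancel hkr, Nat.sub_add_cancel (hkr.trans hrν)]
    refine sum_congr rfl fun n _ => ?_
    simp only [partialDensityTerm, addRightEmbedding_apply, Nat.add_sub_cancel,
      show ν - (n + k) = ν - k - n by omega, C]
    ring
  simp_rw [hreindex]
  refine (qDeriv_sum_qSubPow_mul_qSubPow hq0 hz y t
    (fun n => qInvMultinomial q k n (ν - k - n) * C) (by omega) fun n hn => ?_).trans ?_
  · obtain ⟨d, hd⟩ : ∃ d, ν - k = n + 1 + d := ⟨ν - k - n - 1, by omega⟩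
    simp only [hd, show n + 1 + d - (n + 1) = d by omega, show n + 1 + d - n = d + 1 by omega,
      Nat.add_sub_cancel, qInvMultinomial_rotate q k]
    linear_combination C * qInvMultinomial_succ_mul hq0 hq n d k
  · simp only [show ν - k - (r - k) = ν - r by omega, C]
    ring

lemma jointDensity_eq (hq : |q| ≠ 1) (ht : t ≠ 0) {k r ν : ℕ}
    (hk : 1 ≤ k) (hkr : k < r) (hrν : r ≤ ν) (y : ℝ) {z : ℝ} (hz : z ≠ 0) :
    jointDensity q t k r ν y z
      = qInvMultinomial q k (r - k) (ν - r) * qnum q k * qnum q (r - k) * y ^ (k - 1) / t ^ ν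
        * (qSubPow q z (y / q) (r - k - 1) * qSubPow q t z (ν - r)) := by
  obtain ⟨a, rfl⟩ := Nat.exists_eq_add_of_le' hk
  obtain ⟨b, rfl⟩ : ∃ b, r = a + 1 + (b + 1) := ⟨r - a - 2, by omega⟩
  obtain ⟨m, rfl⟩ := Nat.exists_eq_add_of_le hrν
  have hexp : -(((a + 1 + (b + 1) : ℕ) : ℤ)
        * (((a + 1 + (b + 1) + m : ℕ) : ℤ) - ((a + 1 + (b + 1) : ℕ) : ℤ)))
      - ((a + 1 : ℕ) : ℤ) * (((a + 1 + (b + 1) : ℕ) : ℤ) - ((a + 1 : ℕ) : ℤ))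
      = -(((a + 1) * (b + 1) + (a + 1) * m + (b + 1) * m : ℕ) : ℤ) := by
    push_cast; ring
  have hshift : ∏ i ∈ range b, (1 - y / q / (q ^ i * z))
      = ∏ i ∈ range b, (1 - y / (q ^ (i + 1) * z)) :=
    prod_congr rfl fun i _ => by rw [div_div, pow_succ']; ring
  rw [jointDensity, hexp, zpow_neg, zpow_natCast, ← inv_pow]
  simp only [qInvMultinomial, Nat.add_sub_cancel, Nat.add_sub_cancel_left, qfact_succ,
    qSubPow_eq_pow_mul_prod hz, qSubPow_eq_pow_mul_prod ht, hshift]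
  have := qfact_ne_zero hq a
  have := qfact_ne_zero hq b
  have := qfact_ne_zero hq m
  have := qnum_ne_zero hq a.succ_ne_zero
  have := qnum_ne_zero hq b.succ_ne_zero
  generalize q⁻¹ ^ _ = K
  generalize ∏ i ∈ range b, (1 - y / (q ^ (i + 1) * z)) = A
  generalize ∏ i ∈ range m, (1 - z / (q ^ i * t)) = B
  rw [pow_add t _ m]
  field_simp

end JointDistribution

/-- Applying the `q`-derivative first in `y` and then in `z` to the joint `q`-distribution
function of the `k`-th and `r`-th `q`-order statistics yields the corresponding joint
`q`-density (a `q`-Dirichlet density). -/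
theorem stmt16 (q t : ℝ) (hq0 : 0 < q) (hq1 : q < 1) (ht : 0 < t) (k r ν : ℕ)
    (hk : 1 ≤ k) (hkr : k < r) (hrν : r ≤ ν)
    (F : ℝ → ℝ → ℝ)
    (hF : ∀ y z : ℝ, F y z
      = ∑ j ∈ Finset.Icc r ν, ∑ s ∈ Finset.Icc k j,
          q ^ (-((s : ℤ) * ((ν : ℤ) - (s : ℤ))) - ((j : ℤ) - (s : ℤ)) * ((ν : ℤ) - (j : ℤ)))
            * (qfact q ν / (qfact q s * qfact q (j - s) * qfact q (ν - j)))
            * (y / t) ^ s * (z / t) ^ (j - s)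
            * (∏ i ∈ Finset.range (j - s), (1 - y / (q ^ i * z)))
            * (∏ m ∈ Finset.range (ν - j), (1 - z / (q ^ m * t))))
    (G : ℝ → ℝ → ℝ)
    (hG : ∀ y z : ℝ, G y z = (F y z - F (q * y) z) / ((1 - q) * y))
    (y z : ℝ) (hy : y ≠ 0) (hz : z ≠ 0) :
    (G y z - G y (q * z)) / ((1 - q) * z)
      = q ^ (-((r : ℤ) * ((ν : ℤ) - (r : ℤ))) - (k : ℤ) * ((r : ℤ) - (k : ℤ)))
          * (qfact q ν / (qfact q (k - 1) * qfact q (r - k - 1) * qfact q (ν - r)))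
          * (y ^ (k - 1) / t ^ r) * z ^ (r - k - 1)
          * (∏ i ∈ Finset.range (r - k - 1), (1 - y / (q ^ (i + 1) * z)))
          * (∏ m ∈ Finset.range (ν - r), (1 - z / (q ^ m * t))) := by
  have hq : q ≠ 0 := hq0.ne'
  have habs : |q| ≠ 1 := by rw [abs_of_pos hq0]; exact hq1.ne
  have hFterms : ∀ y z, F y z = ∑ j ∈ Icc r ν, ∑ s ∈ Icc k j, jointCdfTerm q t ν j s y z := hF
  have hGpartial : ∀ w ≠ 0, G y w = ∑ j ∈ Icc r ν, partialDensityTerm q t k ν j y w := by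
    intro w hw
    refine (hG y w).trans ?_
    change qDeriv q (fun y => F y w) y = _
    rw [funext fun y => hFterms y w, qDeriv_sum]
    exact sum_congr rfl fun j hj =>
      qDeriv_sum_jointCdfTerm hq habs ht.ne' (hkr.le.trans (mem_Icc.1 hj).1) (mem_Icc.1 hj).2 hy hw
  calc _ = qDeriv q (G y) z := rfl
    _ = qDeriv q (fun w => ∑ j ∈ Icc r ν, partialDensityTerm q t k ν j y w) z :=
        qDeriv_congr (hGpartial z hz) (hGpartial _ (mul_ne_zero hq hz))
    _ = jointDensity q t k r ν y z := by
        rw [qDeriv_sum_partialDensityTerm hq habs y hkr.le hrν hz,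
          jointDensity_eq habs ht.ne' hk hkr hrν y hz]
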